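/- Let G ⊆ [0,1]^d and let B be a countable collection of dyadic cubes in [0,1]^d such that 3Q ∩ G ≠ ∅ for every Q ∈ B, and such that each x ∈ G is contained in at most N different cubes 7Q with Q ∈ B. Then there exist disjoint subcollections 𝒜₁, …, 𝒜_N of B such that B = 𝒜₁ ∪ 𝒜₂ ∪ … ∪ 𝒜_N and such that for every i ∈ {1,…,N}, any two distinct cubes Q, R ∈ 𝒜_i satisfy 3Q ∩ 3R = ∅. -/

import Mathlib

open Metric

noncomputable section

/-- The closed unit cube `[0,1]^d` in Euclidean space. -/
def unitCube (d : ℕ) : Set (EuclideanSpace ℝ (Fin d)) := {x | ∀ i, 0 ≤ x i ∧ x i ≤ 1}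

/-- The dyadic cube `Q = Π_i [a_i·2^{-k}, (a_i+1)·2^{-k})`. -/
def dyCube (d k : ℕ) (a : Fin d → ℕ) : Set (EuclideanSpace ℝ (Fin d)) :=
  {x | ∀ i, (a i : ℝ) * 2 ^ (-(k : ℤ)) ≤ x i ∧ x i < ((a i : ℝ) + 1) * 2 ^ (-(k : ℤ))}

/-- The tripled dyadic cube `3Q = Π_i [(a_i-1)·2^{-k}, (a_i+2)·2^{-k})`. -/
def dyCube3 (d k : ℕ) (a : Fin d → ℕ) : Set (EuclideanSpace ℝ (Fin d)) :=
  {x | ∀ i, ((a i : ℝ) - 1) * 2 ^ (-(k : ℤ)) ≤ x i ∧ x i < ((a i : ℝ) + 2) * 2 ^ (-(k : ℤ))}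

/-- The septupled dyadic cube `7Q = Π_i [(a_i-3)·2^{-k}, (a_i+4)·2^{-k})`. -/
def dyCube7 (d k : ℕ) (a : Fin d → ℕ) : Set (EuclideanSpace ℝ (Fin d)) :=
  {x | ∀ i, ((a i : ℝ) - 3) * 2 ^ (-(k : ℤ)) ≤ x i ∧ x i < ((a i : ℝ) + 4) * 2 ^ (-(k : ℤ))}

/-- `sparse(E, 7Q) = sup { dist(x, 7Q ∩ E) : x ∈ 7Q } / side(7Q)` with `side(7Q) = 7·2^{-k}`. -/
def sparse7 {d : ℕ} (E : Set (EuclideanSpace ℝ (Fin d))) (k : ℕ) (a : Fin d → ℕ) : ℝ :=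
  (⨆ x : (dyCube7 d k a),
    Metric.infDist (x : EuclideanSpace ℝ (Fin d)) (dyCube7 d k a ∩ E)) / (7 * 2 ^ (-(k : ℤ)))

/-- An index for a dyadic cube of `[0,1]^d`: a scale `k` and a corner `a : Fin d → Fin (2^k)`. -/
abbrev DyIdx (d : ℕ) := Σ k : ℕ, Fin d → Fin (2 ^ k)

/-- The tripled cube of an indexed dyadic cube. -/
def idx3 {d : ℕ} (q : DyIdx d) : Set (EuclideanSpace ℝ (Fin d)) :=
  dyCube3 d q.1 (fun i => (q.2 i : ℕ))

/-- The septupled cube of an indexed dyadic cube. -/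
def idx7 {d : ℕ} (q : DyIdx d) : Set (EuclideanSpace ℝ (Fin d)) :=
  dyCube7 d q.1 (fun i => (q.2 i : ℕ))

/-! Order the cubes coarse-to-fine and colour them greedily. If `R` precedes `Q` and
`3Q ∩ 3R ≠ ∅`, then `R` is at least as large as `Q`, and since dyadic corners are integer
multiples of the side length, `3Q ⊆ 7R`. A point `x ∈ 3Q ∩ G` thus lies in `7Q` and in `7R` for
every earlier neighbour `R` of `Q`, so `Q` has at most `N - 1` earlier neighbours and one of the
colours `0, …, N - 1` is still free for it. -/

section GreedyColoring

variable {α : Type*} (r : α → α → Prop) (adj : α → α → Prop) (B : Set α)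

def freeColors (c : α → ℕ) (q : α) : Set ℕ :=
  {m | ∀ q', r q' q → q' ∈ B → adj q q' → c q' ≠ m}

def greedyColoring [IsWellFounded α r] : α → ℕ :=
  IsWellFounded.fix r fun q c => sInf {m | ∀ q' (h : r q' q), q' ∈ B → adj q q' → c q' h ≠ m}

lemma greedyColoring_eq [IsWellFounded α r] (q : α) :
    greedyColoring r adj B q = sInf (freeColors r adj B (greedyColoring r adj B) q) :=
  IsWellFounded.fix_eq _ _ _

lemma exists_lt_mem_freeColors {N : ℕ} (c : α → ℕ) {q : α}
    (hdeg : ∀ S : Finset α, (∀ q' ∈ S, r q' q ∧ q' ∈ B ∧ adj q q') → S.card < N) :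
    ∃ m < N, m ∈ freeColors r adj B c q := by
  classical
  by_contra! hused
  have hwit : ∀ m : Fin N, ∃ q', r q' q ∧ q' ∈ B ∧ adj q q' ∧ c q' = m := by
    intro m
    simpa [freeColors] using hused m m.2
  choose f hfr hfB hfadj hfc using hwit
  have hinj : Function.Injective f := fun m m' h => Fin.ext (by rw [← hfc m, ← hfc m', h])
  have hcard := hdeg (Finset.univ.image f) (by simpa using fun m => ⟨hfr m, hfB m, hfadj m⟩)
  rw [Finset.card_image_of_injective _ hinj, Finset.card_univ, Fintype.card_fin] at hcard
  exact lt_irrefl N hcard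

theorem exists_coloring_of_card_earlier_neighbors_lt [IsWellOrder α r] {N : ℕ}
    (hadj : ∀ {q q'}, adj q q' → adj q' q)
    (hdeg : ∀ q ∈ B, ∀ S : Finset α, (∀ q' ∈ S, r q' q ∧ q' ∈ B ∧ adj q q') → S.card < N) :
    ∃ c : α → ℕ, (∀ q ∈ B, c q < N) ∧ ∀ q ∈ B, ∀ q' ∈ B, q ≠ q' → adj q q' → c q ≠ c q' := by
  set c := greedyColoring r adj B
  have hfree : ∀ q ∈ B, c q < N ∧ c q ∈ freeColors r adj B c q := by
    intro q hq
    obtain ⟨m, hmN, hm⟩ := exists_lt_mem_freeColors r adj B c (hdeg q hq)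
    rw [show c q = _ from greedyColoring_eq r adj B q]
    exact ⟨(Nat.sInf_le hm).trans_lt hmN, Nat.sInf_mem ⟨m, hm⟩⟩
  refine ⟨c, fun q hq => (hfree q hq).1, fun q hq q' hq' hne hqq' => ?_⟩
  rcases trichotomous_of r q q' with h | h | h
  · exact (hfree q' hq').2 q h hq (hadj hqq')
  · exact absurd h hne
  · exact ((hfree q hq).2 q' h hq' hqq').symm

end GreedyColoring

theorem exists_partition_of_coloring {α : Type*} {adj : α → α → Prop} {B : Set α} {N : ℕ}
    (c : α → ℕ) (hcN : ∀ q ∈ B, c q < N)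
    (hc : ∀ q ∈ B, ∀ q' ∈ B, q ≠ q' → adj q q' → c q ≠ c q') :
    ∃ 𝒜 : Fin N → Set α, (∀ i, 𝒜 i ⊆ B) ∧ (∀ i j, i ≠ j → 𝒜 i ∩ 𝒜 j = ∅) ∧
      (⋃ i, 𝒜 i) = B ∧ ∀ i, ∀ q ∈ 𝒜 i, ∀ q' ∈ 𝒜 i, q ≠ q' → ¬ adj q q' := by
  refine ⟨fun i => {q ∈ B | c q = i}, fun i q hq => hq.1, fun i j hij => ?_, ?_,
    fun i q hq q' hq' hne hadj => hc q hq.1 q' hq'.1 hne hadj (hq.2.trans hq'.2.symm)⟩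
  · refine Set.eq_empty_of_forall_notMem fun q hq => hij (Fin.ext ?_)
    exact hq.1.2.symm.trans hq.2.2
  · ext q
    simp only [Set.mem_iUnion]
    exact ⟨fun ⟨_, hq, _⟩ => hq, fun hq => ⟨⟨c q, hcN q hq⟩, hq, rfl⟩⟩

lemma Ico_triple_subset_Ico_septuple {a b : ℤ} {M : ℕ} (hM : 0 < M) {s x : ℝ} (hs : 0 < s)
    (hxa : x ∈ Set.Ico ((a - 1) * s) ((a + 2) * s))
    (hxb : x ∈ Set.Ico ((b - 1) * (M * s)) ((b + 2) * (M * s))) :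
    Set.Ico ((a - 1) * s) ((a + 2) * s) ⊆ Set.Ico ((b - 3) * (M * s)) ((b + 4) * (M * s)) := by
  -- the strict inequalities read off from `x` compare integers, so they gain a whole unit
  have hup : a - 1 < (b + 2) * M := by
    have : ((a - 1 : ℤ) : ℝ) * s < ((b + 2) * M : ℤ) * s := by
      push_cast; nlinarith [hxa.1, hxb.2]
    exact_mod_cast lt_of_mul_lt_mul_right this hs.le
  have hlow : (b - 1) * M < a + 2 := by
    have : (((b - 1) * M : ℤ) : ℝ) * s < ((a + 2 : ℤ) : ℝ) * s := by
      push_cast; nlinarith [hxa.2, hxb.1]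
    exact_mod_cast lt_of_mul_lt_mul_right this hs.le
  have hM1 : (1 : ℤ) ≤ M := by exact_mod_cast hM
  have hleft : ((b - 3) * M : ℤ) ≤ a - 1 := by nlinarith
  have hright : a + 2 ≤ ((b + 4) * M : ℤ) := by nlinarith
  apply Set.Ico_subset_Ico
  · have : (((b - 3) * M : ℤ) : ℝ) ≤ ((a - 1 : ℤ) : ℝ) := by exact_mod_cast hleft
    push_cast at this
    nlinarith
  · have : ((a + 2 : ℤ) : ℝ) ≤ (((b + 4) * M : ℤ) : ℝ) := by exact_mod_cast hright
    push_cast at this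
    nlinarith

lemma two_zpow_neg_eq_mul {k k' : ℕ} (hk : k' ≤ k) :
    (2 : ℝ) ^ (-(k' : ℤ)) = ((2 ^ (k - k') : ℕ) : ℝ) * 2 ^ (-(k : ℤ)) := by
  rw [Nat.cast_pow, Nat.cast_ofNat, ← zpow_natCast, ← zpow_add₀ two_ne_zero]
  congr 1
  omega

lemma idx3_subset_idx7_of_scale_le {d : ℕ} {q q' : DyIdx d} (hk : q'.1 ≤ q.1)
    (hne : (idx3 q ∩ idx3 q').Nonempty) : idx3 q ⊆ idx7 q' := by
  obtain ⟨x, hx, hx'⟩ := hne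
  intro y hy i
  have key := Ico_triple_subset_Ico_septuple (a := (q.2 i : ℕ)) (b := (q'.2 i : ℕ))
    (M := 2 ^ (q.1 - q'.1)) (by positivity) (by positivity : (0 : ℝ) < 2 ^ (-(q.1 : ℤ)))
    (x := x i)
  simp only [Int.cast_natCast, ← two_zpow_neg_eq_mul hk] at key
  exact key (hx i) (hx' i) (hy i)

def scaleLex (d : ℕ) : DyIdx d → DyIdx d → Prop :=
  (Prod.Lex (· < ·) WellOrderingRel).onFun fun q => (q.1, q)

instance (d : ℕ) : IsWellOrder (DyIdx d) (scaleLex d) :=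
  Function.Injective.isWellOrder (f := fun q : DyIdx d => (q.1, q)) _
    fun _ _ h => congrArg Prod.snd h

lemma scale_le_of_scaleLex {d : ℕ} {q q' : DyIdx d} (h : scaleLex d q' q) : q'.1 ≤ q.1 := by
  rcases Prod.lex_def.1 h with h | ⟨h, -⟩
  · exact h.le
  · exact h.le

lemma card_lt_of_earlier_overlapping {d N : ℕ} {G : Set (EuclideanSpace ℝ (Fin d))}
    {B : Set (DyIdx d)} (hmeet : ∀ q ∈ B, (idx3 q ∩ G).Nonempty)
    (hover : ∀ x ∈ G, ∀ S : Finset (DyIdx d),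
      (↑S : Set (DyIdx d)) ⊆ B → (∀ q ∈ S, x ∈ idx7 q) → S.card ≤ N) :
    ∀ q ∈ B, ∀ S : Finset (DyIdx d),
      (∀ q' ∈ S, scaleLex d q' q ∧ q' ∈ B ∧ (idx3 q ∩ idx3 q').Nonempty) → S.card < N := by
  intro q hq S hS
  obtain ⟨x, hx, hxG⟩ := hmeet q hq
  have hqS : q ∉ S := fun h => irrefl q (hS q h).1
  have hsub : ↑(insert q S) ⊆ B := by
    simpa [Set.insert_subset_iff] using ⟨hq, fun q' h => (hS q' h).2.1⟩
  have hmem : ∀ q' ∈ insert q S, x ∈ idx7 q' := by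
    simp only [Finset.mem_insert, forall_eq_or_imp]
    exact ⟨idx3_subset_idx7_of_scale_le le_rfl ⟨x, hx, hx⟩ hx, fun q' h =>
      idx3_subset_idx7_of_scale_le (scale_le_of_scaleLex (hS q' h).1) (hS q' h).2.2 hx⟩
  have := hover x hxG _ hsub hmem
  rw [Finset.card_insert_of_notMem hqS] at this
  omega

theorem coloring_of_cubes_general (d N : ℕ) (G : Set (EuclideanSpace ℝ (Fin d)))
    (B : Set (DyIdx d))
    (hmeet : ∀ q ∈ B, (idx3 q ∩ G).Nonempty)
    (hover : ∀ x ∈ G, ∀ S : Finset (DyIdx d),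
      (↑S : Set (DyIdx d)) ⊆ B → (∀ q ∈ S, x ∈ idx7 q) → S.card ≤ N) :
    ∃ 𝒜 : Fin N → Set (DyIdx d),
      (∀ i, 𝒜 i ⊆ B) ∧
      (∀ i j, i ≠ j → 𝒜 i ∩ 𝒜 j = ∅) ∧
      (⋃ i, 𝒜 i) = B ∧
      ∀ i, ∀ q ∈ 𝒜 i, ∀ q' ∈ 𝒜 i, q ≠ q' → idx3 q ∩ idx3 q' = ∅ := by
  obtain ⟨c, hcN, hc⟩ := exists_coloring_of_card_earlier_neighbors_lt (scaleLex d)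
    (fun q q' => (idx3 q ∩ idx3 q').Nonempty) B (fun h => Set.inter_comm _ _ ▸ h)
    (card_lt_of_earlier_overlapping hmeet hover)
  obtain ⟨𝒜, h𝒜B, h𝒜disj, h𝒜union, h𝒜indep⟩ := exists_partition_of_coloring c hcN hc
  exact ⟨𝒜, h𝒜B, h𝒜disj, h𝒜union, fun i q hq q' hq' hne =>
    Set.not_nonempty_iff_eq_empty.1 (h𝒜indep i q hq q' hq' hne)⟩

/-- **Coloring lemma.** If `B` is a countable collection of dyadic cubes of `[0,1]^d`
such that `3Q ∩ G ≠ ∅` for all `Q ∈ B` and each `x ∈ G` lies in at most `N` cubes `7Q`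
with `Q ∈ B`, then `B` splits into `N` disjoint subcollections `𝒜₁, …, 𝒜_N`, within
each of which distinct cubes `Q, R` satisfy `3Q ∩ 3R = ∅`. -/
theorem coloring_of_cubes (d N : ℕ) (G : Set (EuclideanSpace ℝ (Fin d)))
    (hG : G ⊆ unitCube d) (B : Set (DyIdx d)) (hBcount : B.Countable)
    (hmeet : ∀ q ∈ B, (idx3 q ∩ G).Nonempty)
    (hover : ∀ x ∈ G, ∀ S : Finset (DyIdx d),
      (↑S : Set (DyIdx d)) ⊆ B → (∀ q ∈ S, x ∈ idx7 q) → S.card ≤ N) :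
    ∃ 𝒜 : Fin N → Set (DyIdx d),
      (∀ i, 𝒜 i ⊆ B) ∧
      (∀ i j, i ≠ j → 𝒜 i ∩ 𝒜 j = ∅) ∧
      (⋃ i, 𝒜 i) = B ∧
      ∀ i, ∀ q ∈ 𝒜 i, ∀ q' ∈ 𝒜 i, q ≠ q' → idx3 q ∩ idx3 q' = ∅ :=
  coloring_of_cubes_general d N G B hmeet hover
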